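/- arXiv:2304.09837 — 2 statements merged into one kernel-verified Lean document; each statement's English description precedes it below -/
import Mathlib

section
/- If X ~ N(0, σ²R²) and Y ~ N(0, σ²) are independent Gaussian random variables, then P(|X| ≥ |Y|) = (2/π) arctan R. -/
open MeasureTheory ProbabilityTheory Real Set

/-!
After scaling each coordinate by its standard deviation, the event becomes the cone
`|y| ≤ R |x|` under the standard Gaussian measure on the plane. In polar coordinates this
measure has density `r e^{-r²/2} / 2π` in `(r, θ)`, so a cone has probability equal to its
angular measure divided by `2π`. The angles with `|sin θ| ≤ R |cos θ|` form, modulo `π`, the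
interval `[-arctan R, arctan R]`, hence occupy `4 arctan R` of a full turn.
-/

theorem gaussianPDF_mul_polar (r θ : ℝ) :
    gaussianPDF 0 1 (r * cos θ) * gaussianPDF 0 1 (r * sin θ) =
      gaussianPDF 0 1 r * gaussianPDF 0 1 0 := by
  simp only [gaussianPDF, gaussianPDFReal, NNReal.coe_one, mul_one, sub_zero]
  rw [← ENNReal.ofReal_mul (by positivity), ← ENNReal.ofReal_mul (by positivity)]
  have hexp : rexp (-(r * cos θ) ^ 2 / 2) * rexp (-(r * sin θ) ^ 2 / 2) =
      rexp (-r ^ 2 / 2) * rexp (-0 ^ 2 / 2) := by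
    rw [← exp_add, ← exp_add]
    congr 1
    linear_combination (-(r ^ 2) / 2) * sin_sq_add_cos_sq θ
  congr 1
  linear_combination (√(2 * π))⁻¹ ^ 2 * hexp

theorem gaussianReal_prod_cone_eq_mul {S : Set (ℝ × ℝ)} (hS : MeasurableSet S)
    (hcone : ∀ r : ℝ, 0 < r → ∀ p : ℝ × ℝ, r • p ∈ S ↔ p ∈ S) :
    (gaussianReal 0 1).prod (gaussianReal 0 1) S =
      (∫⁻ r in Ioi 0, ENNReal.ofReal r * gaussianPDF 0 1 r * gaussianPDF 0 1 0) *
        volume ({θ | (cos θ, sin θ) ∈ S} ∩ Ioo (-π) π) := by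
  have hT : MeasurableSet {θ : ℝ | (cos θ, sin θ) ∈ S} := hS.preimage (by fun_prop)
  have hpolar : EqOn
      (fun p : ℝ × ℝ ↦ ENNReal.ofReal p.1 •
        S.indicator (fun z ↦ gaussianPDF 0 1 z.1 * gaussianPDF 0 1 z.2) (polarCoord.symm p))
      (fun p ↦ (ENNReal.ofReal p.1 * gaussianPDF 0 1 p.1 * gaussianPDF 0 1 0) *
        {θ | (cos θ, sin θ) ∈ S}.indicator 1 p.2)
      (Ioi 0 ×ˢ Ioo (-π) π) := by
    rintro ⟨r, θ⟩ ⟨hr, -⟩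
    have hmem : (r * cos θ, r * sin θ) ∈ S ↔ (cos θ, sin θ) ∈ S := hcone r hr (cos θ, sin θ)
    by_cases h : (cos θ, sin θ) ∈ S
    · simp [polarCoord_symm_apply, hmem.2 h, h, gaussianPDF_mul_polar, mul_assoc]
    · simp [polarCoord_symm_apply, mt hmem.1 h, h]
  rw [gaussianReal_of_var_ne_zero 0 one_ne_zero,
    prod_withDensity (measurable_gaussianPDF 0 1) (measurable_gaussianPDF 0 1),
    withDensity_apply _ hS, ← lintegral_indicator hS, ← Measure.volume_eq_prod,
    ← lintegral_comp_polarCoord_symm,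
    polarCoord_target, setLIntegral_congr_fun (measurableSet_Ioi.prod measurableSet_Ioo) hpolar,
    Measure.volume_eq_prod, ← Measure.prod_restrict,
    lintegral_prod_mul (f := fun r ↦ ENNReal.ofReal r * gaussianPDF 0 1 r * gaussianPDF 0 1 0)
      (g := {θ | (cos θ, sin θ) ∈ S}.indicator 1) (by fun_prop)
      ((measurable_one.indicator hT).aemeasurable), lintegral_indicator_one hT,
    Measure.restrict_apply hT]

/-- The radial factor is the same for every cone; the whole plane, of mass `1` and angular
measure `2π`, identifies it. -/
theorem gaussianReal_prod_cone {S : Set (ℝ × ℝ)} (hS : MeasurableSet S)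
    (hcone : ∀ r : ℝ, 0 < r → ∀ p : ℝ × ℝ, r • p ∈ S ↔ p ∈ S) :
    (gaussianReal 0 1).prod (gaussianReal 0 1) S =
      volume ({θ | (cos θ, sin θ) ∈ S} ∩ Ioo (-π) π) / ENNReal.ofReal (2 * π) := by
  have hplane := gaussianReal_prod_cone_eq_mul MeasurableSet.univ (fun _ _ _ ↦ Iff.rfl)
  simp only [measure_univ, mem_univ, ofPred_true, univ_inter, Real.volume_Ioo, sub_neg_eq_add,
    ← two_mul] at hplane
  rw [gaussianReal_prod_cone_eq_mul hS hcone, ENNReal.eq_inv_of_mul_eq_one_left hplane.symm,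
    div_eq_mul_inv, mul_comm]

theorem intervalIntegral_indicator_one {μ : Measure ℝ} {s : Set ℝ} (hs : MeasurableSet s)
    {a b : ℝ} (hab : a ≤ b) : ∫ x in a..b, s.indicator 1 x ∂μ = μ.real (s ∩ Ioc a b) := by
  rw [intervalIntegral.integral_of_le hab, integral_indicator_one hs,
    measureReal_restrict_apply hs]

theorem abs_sin_le_mul_abs_cos_iff {R θ : ℝ} (hθ : θ ∈ Ioo (-(π / 2)) (π / 2)) :
    |sin θ| ≤ R * |cos θ| ↔ |θ| ≤ arctan R := by
  have hcos : 0 < cos θ := cos_pos_of_mem_Ioo hθ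
  rw [abs_of_pos hcos, ← div_le_iff₀ hcos, ← abs_of_pos hcos, ← abs_div, ← tan_eq_sin_div_cos,
    abs_le, abs_le, ← arctan_strictMono.le_iff_le (a := -R),
    ← arctan_strictMono.le_iff_le (b := R), arctan_tan hθ.1 hθ.2, arctan_neg]

theorem volume_abs_sin_le_mul_abs_cos {R : ℝ} (hR : 0 ≤ R) :
    volume ({θ | |sin θ| ≤ R * |cos θ|} ∩ Ioo (-π) π) = ENNReal.ofReal (4 * arctan R) := by
  set T := {θ : ℝ | |sin θ| ≤ R * |cos θ|}
  have hT : MeasurableSet T := measurableSet_le (by fun_prop) (by fun_prop)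
  have hper : Function.Periodic (T.indicator (1 : ℝ → ℝ)) π := fun θ ↦ by
    simp [T, indicator, sin_add_pi, cos_add_pi]
  have hint : ∀ a b, IntervalIntegrable (T.indicator (1 : ℝ → ℝ)) volume a b := fun a b ↦
    intervalIntegrable_iff.2 ((integrableOn_const (by simp)).indicator hT)
  have hstrip : T ∩ Ioo (-(π / 2)) (π / 2) = Icc (-arctan R) (arctan R) := by
    ext θ
    rw [mem_Icc, ← abs_le]
    refine ⟨fun ⟨hθT, hθ⟩ ↦ (abs_sin_le_mul_abs_cos_iff hθ).1 hθT, fun hθa ↦ ?_⟩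
    have hθ : θ ∈ Ioo (-(π / 2)) (π / 2) := abs_lt.1 (hθa.trans_lt (arctan_lt_pi_div_two R))
    exact ⟨(abs_sin_le_mul_abs_cos_iff hθ).2 hθa, hθ⟩
  have hperiods : ∫ θ in -π..π, T.indicator (1 : ℝ → ℝ) θ =
      2 * ∫ θ in -(π / 2)..π / 2, T.indicator (1 : ℝ → ℝ) θ := by
    have h := hper.intervalIntegral_add_zsmul_eq 2 (-π) hint
    rw [hper.intervalIntegral_add_eq (-π) (-(π / 2))] at h
    simp only [zsmul_eq_mul, Int.cast_ofNat] at h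
    rwa [show -π + 2 * π = π by ring, show -(π / 2) + π = π / 2 by ring] at h
  calc volume (T ∩ Ioo (-π) π) = volume (T ∩ Ioc (-π) π) :=
        measure_congr (Filter.EventuallyEq.rfl.inter Ioo_ae_eq_Ioc)
    _ = ENNReal.ofReal (∫ θ in -π..π, T.indicator (1 : ℝ → ℝ) θ) := by
        rw [intervalIntegral_indicator_one hT (by linarith [pi_pos]),
          ofReal_measureReal ((measure_mono inter_subset_right).trans_lt measure_Ioc_lt_top).ne]
    _ = ENNReal.ofReal (4 * arctan R) := by
        rw [hperiods, intervalIntegral_indicator_one hT (by linarith [pi_pos]),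
          measureReal_congr (Filter.EventuallyEq.rfl.inter Ioo_ae_eq_Ioc).symm, hstrip,
          volume_real_Icc_of_le (by linarith [arctan_nonneg.2 hR])]
        ring_nf

theorem gaussianReal_prod_abs_le_mul_abs {R : ℝ} (hR : 0 ≤ R) :
    (gaussianReal 0 1).prod (gaussianReal 0 1) {p | |p.2| ≤ R * |p.1|} =
      ENNReal.ofReal (2 / π * arctan R) := by
  have hcone : ∀ r : ℝ, 0 < r → ∀ p : ℝ × ℝ,
      r • p ∈ {p : ℝ × ℝ | |p.2| ≤ R * |p.1|} ↔ p ∈ {p : ℝ × ℝ | |p.2| ≤ R * |p.1|} := by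
    intro r hr p
    simp only [mem_ofPred_eq, Prod.smul_fst, Prod.smul_snd, smul_eq_mul, abs_mul, abs_of_pos hr,
      mul_left_comm R r, mul_le_mul_iff_right₀ hr]
  rw [gaussianReal_prod_cone (measurableSet_le (by fun_prop) (by fun_prop)) hcone]
  simp only [mem_ofPred_eq]
  rw [volume_abs_sin_le_mul_abs_cos hR, ← ENNReal.ofReal_div_of_pos (by positivity)]
  congr 1
  field_simp
  ring

theorem gaussianReal_zero_eq_map_mul (v : NNReal) :
    gaussianReal 0 v = (gaussianReal 0 1).map (√v * ·) := by
  rw [gaussianReal_map_const_mul, mul_zero, mul_one]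
  congr
  ext
  simp

theorem gaussianReal_prod_abs_le_abs {v₁ v₂ : NNReal} (hv₂ : v₂ ≠ 0) :
    ((gaussianReal 0 v₁).prod (gaussianReal 0 v₂)) {p : ℝ × ℝ | |p.2| ≤ |p.1|} =
      ENNReal.ofReal (2 / π * arctan (√v₁ / √v₂)) := by
  have hsqrt : 0 < √(v₂ : ℝ) := Real.sqrt_pos.2 (by positivity)
  have hpre : Prod.map (√v₁ * ·) (√v₂ * ·) ⁻¹' {p : ℝ × ℝ | |p.2| ≤ |p.1|} =
      {p | |p.2| ≤ √v₁ / √v₂ * |p.1|} := by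
    ext p
    simp only [mem_preimage, Prod.map, mem_ofPred_eq, abs_mul, abs_of_pos hsqrt,
      abs_of_nonneg (Real.sqrt_nonneg _), div_mul_eq_mul_div, le_div_iff₀ hsqrt, mul_comm √(v₂ : ℝ)]
  rw [gaussianReal_zero_eq_map_mul v₁, gaussianReal_zero_eq_map_mul v₂,
    Measure.map_prod_map _ _ (measurable_const_mul _) (measurable_const_mul _),
    Measure.map_apply (by fun_prop) (measurableSet_le (by fun_prop) (by fun_prop)), hpre,
    gaussianReal_prod_abs_le_mul_abs (by positivity)]

/-- If `X ~ N(0, σ²R²)` and `Y ~ N(0, σ²)` are independent, then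
`P(|X| ≥ |Y|) = (2/π) arctan R`. -/
theorem gaussian_abs_ratio (σ R : ℝ) (hσ : 0 < σ) (hR : 0 < R)
    (v₁ v₂ : NNReal) (hv₁ : (v₁ : ℝ) = σ^2 * R^2) (hv₂ : (v₂ : ℝ) = σ^2) :
    ((gaussianReal 0 v₁).prod (gaussianReal 0 v₂)) {p : ℝ × ℝ | |p.2| ≤ |p.1|}
      = ENNReal.ofReal (2/π * arctan R) := by
  have hv₂_ne : v₂ ≠ 0 := by
    rw [← NNReal.coe_ne_zero, hv₂]
    positivity
  rw [gaussianReal_prod_abs_le_abs hv₂_ne, hv₁, hv₂, ← mul_pow, Real.sqrt_sq (by positivity),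
    Real.sqrt_sq hσ.le, mul_div_cancel_left₀ R hσ.ne']
end

section
/- Let φ: ℝ → ℝ be a function that is affine linear on (-∞,0] and on [0,∞) but not affine linear on ℝ, let w ≥ 1, and let θ_L, θ_T ∈ ℝ^w, θ'_L ∈ ℝ^w, θ'_T ∈ ℝ. Suppose all coordinates of θ_L are nonzero. Then the function f: ℝ → ℝ given by f(x) = θ'_T + ⟨θ'_L, φ^w(θ_T + x·θ_L)⟩ (where φ^w applies φ coordinatewise) is piecewise affine-linear with at most w points of non-linearity. -/
/-!
Away from the points `-θT i / θL i` every argument `θT i + x * θL i` of `φ` stays on one side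
of `0` near `x`, where `φ` is affine; so each summand, and hence `f`, is affine near `x`.
The points of non-linearity therefore lie among these at most `w` points.
-/

open Set Filter Topology

theorem Set.ncard_range_le_natCard {α β : Type*} [Finite α] (g : α → β) :
    (range g).ncard ≤ Nat.card α := by
  rw [← image_univ, ← ncard_univ α]
  exact ncard_image_le finite_univ

section LocallyAffine

variable {R : Type*} [CommSemiring R] [TopologicalSpace R]

def LocallyAffineAt (g : R → R) (x₀ : R) : Prop :=
  ∃ U ∈ 𝓝 x₀, ∃ a b : R, ∀ x ∈ U, g x = a * x + b

namespace LocallyAffineAt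

theorem const (c x₀ : R) : LocallyAffineAt (fun _ => c) x₀ :=
  ⟨univ, univ_mem, 0, c, fun _ _ => by ring⟩

theorem add {g h : R → R} {x₀ : R} (hg : LocallyAffineAt g x₀) (hh : LocallyAffineAt h x₀) :
    LocallyAffineAt (fun x => g x + h x) x₀ := by
  obtain ⟨U, hU, a, b, hab⟩ := hg
  obtain ⟨V, hV, c, d, hcd⟩ := hh
  exact ⟨U ∩ V, inter_mem hU hV, a + c, b + d, fun x hx => by
    simp only [hab x hx.1, hcd x hx.2]; ring⟩

theorem const_mul {g : R → R} {x₀ : R} (c : R) (hg : LocallyAffineAt g x₀) :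
    LocallyAffineAt (fun x => c * g x) x₀ := by
  obtain ⟨U, hU, a, b, hab⟩ := hg
  exact ⟨U, hU, c * a, c * b, fun x hx => by simp only [hab x hx]; ring⟩

theorem finset_sum {ι : Type*} (s : Finset ι) {g : ι → R → R} {x₀ : R}
    (hg : ∀ i ∈ s, LocallyAffineAt (g i) x₀) :
    LocallyAffineAt (fun x => ∑ i ∈ s, g i x) x₀ := by
  classical
  induction s using Finset.induction_on with
  | empty => simpa using const 0 x₀
  | insert i s hi ih =>
    simp only [Finset.sum_insert hi]
    exact (hg i (s.mem_insert_self i)).add (ih fun j hj => hg j (Finset.mem_insert_of_mem hj))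

theorem comp_affine [IsTopologicalSemiring R] {φ : R → R} {c a x₀ : R}
    (hφ : LocallyAffineAt φ (c + x₀ * a)) : LocallyAffineAt (fun x => φ (c + x * a)) x₀ := by
  obtain ⟨U, hU, p, q, hpq⟩ := hφ
  have hcont : ContinuousAt (fun x : R => c + x * a) x₀ := by fun_prop
  exact ⟨_, hcont.preimage_mem_nhds hU, p * a, p * c + q, fun x hx => by
    simp only [hpq _ hx]; ring⟩

end LocallyAffineAt

theorem locallyAffineAt_of_affine_Iic_Ici [LinearOrder R] [OrderTopology R] {φ : R → R}
    (hneg : ∃ a b : R, ∀ x ≤ (0 : R), φ x = a * x + b)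
    (hpos : ∃ a b : R, ∀ x ≥ (0 : R), φ x = a * x + b) {t : R} (ht : t ≠ 0) :
    LocallyAffineAt φ t := by
  obtain ⟨an, bn, hn⟩ := hneg
  obtain ⟨ap, bp, hp⟩ := hpos
  rcases ht.lt_or_gt with ht | ht
  · exact ⟨Iio 0, Iio_mem_nhds ht, an, bn, fun x hx => hn x (le_of_lt hx)⟩
  · exact ⟨Ioi 0, Ioi_mem_nhds ht, ap, bp, fun x hx => hp x (le_of_lt hx)⟩

end LocallyAffine

theorem setOf_not_locallyAffineAt_network_subset {K : Type*} [Field K] [TopologicalSpace K]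
    [IsTopologicalSemiring K] {ι : Type*} [Fintype ι] {φ : K → K}
    (hφ : ∀ t ≠ 0, LocallyAffineAt φ t) (θL θT θL' : ι → K) (θT' : K) :
    {x₀ | ¬ LocallyAffineAt (fun x => θT' + ∑ i, θL' i * φ (θT i + x * θL i)) x₀} ⊆
      range (fun i => -θT i / θL i) := by
  intro x₀ hx₀
  by_contra hx
  refine hx₀ ((LocallyAffineAt.const θT' x₀).add
    (LocallyAffineAt.finset_sum _ fun i _ => LocallyAffineAt.const_mul _ ?_))
  by_cases hθ : θL i = 0
  · simpa [hθ] using LocallyAffineAt.const (φ (θT i)) x₀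
  refine LocallyAffineAt.comp_affine (hφ _ fun h => hx ⟨i, ?_⟩)
  rw [div_eq_iff hθ]
  linear_combination -h

theorem pl_network_nonlinearity_general (φ : ℝ → ℝ)
    (hneg : ∃ a b : ℝ, ∀ x ≤ (0:ℝ), φ x = a * x + b)
    (hpos : ∃ a b : ℝ, ∀ x ≥ (0:ℝ), φ x = a * x + b)
    (w : ℕ)
    (θL θT θL' : Fin w → ℝ) (θT' : ℝ)
    (f : ℝ → ℝ) (hf : ∀ x, f x = θT' + ∑ i, θL' i * φ (θT i + x * θL i))
    (D : Set ℝ)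
    (hD : D = {x₀ : ℝ | ¬ ∃ U ∈ nhds x₀, ∃ a b : ℝ, ∀ x ∈ U, f x = a * x + b}) :
    D.Finite ∧ D.ncard ≤ w := by
  have hDsub : D ⊆ range (fun i => -θT i / θL i) := by
    rw [hD, funext hf]
    exact setOf_not_locallyAffineAt_network_subset
      (fun _ => locallyAffineAt_of_affine_Iic_Ici hneg hpos) θL θT θL' θT'
  refine ⟨(finite_range _).subset hDsub, ?_⟩
  calc D.ncard ≤ (range fun i => -θT i / θL i).ncard := ncard_le_ncard hDsub (finite_range _)
    _ ≤ Nat.card (Fin w) := ncard_range_le_natCard _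
    _ = w := Nat.card_eq_fintype_card.trans (Fintype.card_fin w)

/-- A one-hidden-layer network with a piecewise-linear activation (affine on each half-line,
but not globally affine) and all input weights nonzero is piecewise affine with at most `w`
points of non-linearity. -/
theorem pl_network_nonlinearity (φ : ℝ → ℝ)
    (hneg : ∃ a b : ℝ, ∀ x ≤ (0:ℝ), φ x = a * x + b)
    (hpos : ∃ a b : ℝ, ∀ x ≥ (0:ℝ), φ x = a * x + b)
    (hnotaff : ¬ ∃ a b : ℝ, ∀ x : ℝ, φ x = a * x + b)
    (w : ℕ) (hw : 1 ≤ w)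
    (θL θT θL' : Fin w → ℝ) (θT' : ℝ) (hθL : ∀ i, θL i ≠ 0)
    (f : ℝ → ℝ) (hf : ∀ x, f x = θT' + ∑ i, θL' i * φ (θT i + x * θL i))
    (D : Set ℝ)
    (hD : D = {x₀ : ℝ | ¬ ∃ U ∈ nhds x₀, ∃ a b : ℝ, ∀ x ∈ U, f x = a * x + b}) :
    D.Finite ∧ D.ncard ≤ w :=
  pl_network_nonlinearity_general φ hneg hpos w θL θT θL' θT' f hf D hD
end
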